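/- There exists a four-player stochastic multiplayer non-zero-sum game G in which every player has a terminal reachability objective, and threshold μ = 1, such that the answer to Stationary-Positional-NCRSP for (G, μ) is yes while the answer to Stationary-NCRSP for (G, μ) is no. In the game of Example 4, when environment players are positional, every 0-fixed Nash equilibrium reaches a terminal with system payoff 1; but against the stationary environment strategy in which player 3 branches from v_D to the terminals with payoffs (0,1,0,1) and (0,0,1,1) each with probability 1/2, there is a 0-fixed Nash equilibrium in which the system loses. -/
import Mathlib


/- Common infrastructure for formalizing statements about stochastic
   multiplayer non-zero-sum games (SMGs) and the non-cooperative rational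
   synthesis problem (NCRSP), following the paper's definitions. -/

open scoped ENNReal

namespace NCRSPPaper

/-! ### Game arenas -/

/-- A stochastic multiplayer game arena with players `Fin (k+1)` (player `0`
is the system) over vertex type `V`.  A vertex with `owner v = none` is a
nature vertex; its outgoing transition probabilities are given by `prob`.
Player-controlled vertices have their possible moves given by `edge`. -/
structure Arena (k : ℕ) (V : Type) where
  owner : V → Option (Fin (k + 1))
  edge : V → V → Bool
  prob : V → V → ℚ
  init : V

variable {k : ℕ} {V : Type}

/-- The set of successors of a vertex. -/
def Arena.next (A : Arena k V) (u : V) : Set V :=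
  {v | (A.owner u = none ∧ 0 < A.prob u v) ∨ (A.owner u ≠ none ∧ A.edge u v = true)}

/-- A terminal vertex: its only outgoing edge is the self loop. -/
def Arena.terminal (A : Arena k V) (v : V) : Prop := A.next v = {v}

/-- Well-formedness of an arena: every vertex has a successor and the
nature rows are probability distributions. -/
def Arena.WF [Fintype V] (A : Arena k V) : Prop :=
  (∀ u, (A.next u).Nonempty) ∧
  ∀ u, A.owner u = none → (∀ v, 0 ≤ A.prob u v) ∧ (∑ v, A.prob u v) = 1

/-! ### Plays -/

/-- A play is an infinite sequence of vertices. -/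
abbrev Play (V : Type) := ℕ → V

/-- `infSet π` is the set of vertices occurring infinitely often in `π`. -/
def infSet (π : Play V) : Set V := {v | ∀ m, ∃ l, m ≤ l ∧ π l = v}

/-! ### Strategies -/

/-- A (behavioral, possibly history-dependent, probabilistic) strategy:
given the history of vertices strictly preceding the current one and the
current vertex, it yields a probability distribution over vertices. -/
abbrev Strategy (V : Type) := List V → V → PMF V

/-- A strategy is valid for an arena if it only assigns positive
probability to successors of the current vertex. -/
def Strategy.Valid (A : Arena k V) (σ : Strategy V) : Prop :=
  ∀ hist u v, σ hist u v ≠ 0 → v ∈ A.next u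

/-- A stationary (memoryless) strategy depends only on the current vertex. -/
def Strategy.Stationary (σ : Strategy V) : Prop :=
  ∀ h h' u, σ h u = σ h' u

/-- A pure (deterministic) strategy assigns probability 1 to a single move. -/
def Strategy.Pure (σ : Strategy V) : Prop :=
  ∀ h u, ∃ v, σ h u v = 1

/-- A positional strategy is pure and stationary. -/
def Strategy.Positional (σ : Strategy V) : Prop :=
  Strategy.Stationary σ ∧ Strategy.Pure σ

/-- A finite-state strategy is realized by a Mealy machine with finitely
many memory states. -/
def Strategy.FiniteState (σ : Strategy V) : Prop :=
  ∃ (M : Type) (_ : Finite M) (m0 : M) (upd : M → V → M) (out : M → V → PMF V),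
    ∀ h u, σ h u = out (h.foldl upd m0) u

/-- A `t`-memory strategy only depends on the most recent `t` vertices of
the history (plus the current vertex). -/
def Strategy.TMemory (t : ℕ) (σ : Strategy V) : Prop :=
  ∀ h u, σ h u = σ (h.drop (h.length - t)) u

/-- A strategy profile assigns a strategy to every player. -/
abbrev Profile (k : ℕ) (V : Type) := Fin (k + 1) → Strategy V

def Profile.Valid (A : Arena k V) (σ : Profile k V) : Prop :=
  ∀ i, Strategy.Valid A (σ i)

/-! ### The induced probability of a set of plays -/

/-- One-step transition probability at vertex `u` with preceding history
`hist`, under strategy profile `σ`. -/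
noncomputable def Arena.stepProb (A : Arena k V) (σ : Profile k V)
    (hist : List V) (u v : V) : ℝ≥0∞ :=
  match A.owner u with
  | none => ENNReal.ofReal ((A.prob u v : ℚ) : ℝ)
  | some i => σ i hist u v

/-- Probability that, starting from current vertex `u` with preceding
history `hist`, the play continues with the given finite word. -/
noncomputable def extProb (A : Arena k V) (σ : Profile k V) :
    List V → V → List V → ℝ≥0∞
  | _, _, [] => 1
  | hist, u, v :: rest => A.stepProb σ hist u v * extProb A σ (hist ++ [u]) v rest

/-- Probability that a play starting at `s` begins with the finite word `w`. -/
noncomputable def wordProbFrom [DecidableEq V] (A : Arena k V) (σ : Profile k V)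
    (s : V) : List V → ℝ≥0∞
  | [] => 1
  | v :: rest => (if v = s then 1 else 0) * extProb A σ [] v rest

/-- The cylinder of plays extending a finite word. -/
def cyl (w : List V) : Set (Play V) :=
  {π | ∀ i (h : i < w.length), π i = w.get ⟨i, h⟩}

open scoped Classical in
/-- `PrFrom A σ s O` is the probability, under the strategy profile `σ`
(and nature's probabilities), that a play starting at `s` belongs to `O`.
It is defined as the Carathéodory outer measure generated by the natural
premeasure on cylinder sets. -/
noncomputable def PrFrom [DecidableEq V] (A : Arena k V) (σ : Profile k V)
    (s : V) : Set (Play V) → ℝ≥0∞ :=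
  fun O =>
    MeasureTheory.OuterMeasure.ofFunction
      (fun S => if S = ∅ then 0
                else ⨅ (w : List V) (_ : S ⊆ cyl w), wordProbFrom A σ s w)
      (by simp) O

/-- The payoff of player `i`: probability that the objective `O i` is met,
for the play started at the initial vertex. -/
noncomputable def Pay [DecidableEq V] (A : Arena k V)
    (O : Fin (k + 1) → Set (Play V)) (σ : Profile k V) (i : Fin (k + 1)) : ℝ≥0∞ :=
  PrFrom A σ A.init (O i)

/-! ### Equilibria and synthesis problems -/

/-- Nash equilibrium: no player has a profitable unilateral deviation. -/
def NE [DecidableEq V] (A : Arena k V) (O : Fin (k + 1) → Set (Play V))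
    (σ : Profile k V) : Prop :=
  ∀ i, ∀ τ : Strategy V, Strategy.Valid A τ →
    Pay A O (Function.update σ i τ) i ≤ Pay A O σ i

/-- 0-fixed Nash equilibrium: no environment player (`i ≠ 0`) has a
profitable unilateral deviation. -/
def ZeroNE [DecidableEq V] (A : Arena k V) (O : Fin (k + 1) → Set (Play V))
    (σ : Profile k V) : Prop :=
  ∀ i, i ≠ 0 → ∀ τ : Strategy V, Strategy.Valid A τ →
    Pay A O (Function.update σ i τ) i ≤ Pay A O σ i

/-- The (yes-instances of the) cooperative rational synthesis problem, with
all strategies restricted to class `C`: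
`∃ σ̄. NE(σ̄) ∧ Pay₀(σ̄) ≥ μ`. -/
def CRSPAnswer [DecidableEq V] (A : Arena k V) (O : Fin (k + 1) → Set (Play V))
    (C : Strategy V → Prop) (μ : ℚ) : Prop :=
  ∃ σ : Profile k V, Profile.Valid A σ ∧ (∀ i, C (σ i)) ∧ NE A O σ ∧
    ENNReal.ofReal (μ : ℝ) ≤ Pay A O σ 0

/-- The (yes-instances of the) non-cooperative rational synthesis problem,
with the system's strategy restricted to class `C0` and the environment
players' strategies restricted to class `Cenv`:
`∃ σ₀. ∀ σ̄₋₀. (0NE(σ̄) ⇒ Pay₀(σ̄) ≥ μ)`. -/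
def NCRSPAnswer [DecidableEq V] (A : Arena k V) (O : Fin (k + 1) → Set (Play V))
    (C0 Cenv : Strategy V → Prop) (μ : ℚ) : Prop :=
  ∃ σ0 : Strategy V, Strategy.Valid A σ0 ∧ C0 σ0 ∧
    ∀ σ : Profile k V, σ 0 = σ0 → Profile.Valid A σ →
      (∀ i, i ≠ 0 → Cenv (σ i)) →
      ZeroNE A O σ → ENNReal.ofReal (μ : ℝ) ≤ Pay A O σ 0

/-- The variant `NCRSP>` with strict payoff threshold. -/
def NCRSPgtAnswer [DecidableEq V] (A : Arena k V) (O : Fin (k + 1) → Set (Play V))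
    (C0 Cenv : Strategy V → Prop) (μ : ℚ) : Prop :=
  ∃ σ0 : Strategy V, Strategy.Valid A σ0 ∧ C0 σ0 ∧
    ∀ σ : Profile k V, σ 0 = σ0 → Profile.Valid A σ →
      (∀ i, i ≠ 0 → Cenv (σ i)) →
      ZeroNE A O σ → ENNReal.ofReal (μ : ℝ) < Pay A O σ 0

/-- The complement problem of `NCRSP>`:
`∀ σ₀. ∃ σ̄₋₀. (0NE(σ̄) ∧ Pay₀(σ̄) ≤ μ)`. -/
def CoNCRSPgtAnswer [DecidableEq V] (A : Arena k V) (O : Fin (k + 1) → Set (Play V))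
    (C0 Cenv : Strategy V → Prop) (μ : ℚ) : Prop :=
  ∀ σ0 : Strategy V, Strategy.Valid A σ0 → C0 σ0 →
    ∃ σ : Profile k V, σ 0 = σ0 ∧ Profile.Valid A σ ∧
      (∀ i, i ≠ 0 → Cenv (σ i)) ∧
      ZeroNE A O σ ∧ Pay A O σ 0 ≤ ENNReal.ofReal (μ : ℝ)

/-! ### Objectives -/

/-- Boolean formulas with variables drawn from `α`. -/
inductive BForm (α : Type) : Type
  | tru : BForm α
  | fls : BForm α
  | var : α → BForm α
  | not : BForm α → BForm α
  | and : BForm α → BForm α → BForm α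
  | or : BForm α → BForm α → BForm α

namespace BForm

def holds {α : Type} (θ : α → Prop) : BForm α → Prop
  | tru => True
  | fls => False
  | var a => θ a
  | not f => ¬ holds θ f
  | and f g => holds θ f ∧ holds θ g
  | or f g => holds θ f ∨ holds θ g

def map {α β : Type} (f : α → β) : BForm α → BForm β
  | tru => tru
  | fls => fls
  | var a => var (f a)
  | not g => not (map f g)
  | and g h => and (map f g) (map f h)
  | or g h => or (map f g) (map f h)

def subst {α β : Type} (f : α → BForm β) : BForm α → BForm β
  | tru => tru
  | fls => fls
  | var a => f a
  | not g => not (subst f g)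
  | and g h => and (subst f g) (subst f h)
  | or g h => or (subst f g) (subst f h)

def bigOr {α : Type} : List (BForm α) → BForm α
  | [] => fls
  | f :: fs => or f (bigOr fs)

/-- An (arbitrary but fixed) encoding of Boolean formulas over `ℕ` into `ℕ`. -/
def toNat : BForm ℕ → ℕ
  | tru => Nat.pair 0 0
  | fls => Nat.pair 1 0
  | var i => Nat.pair 2 i
  | not f => Nat.pair 3 (toNat f)
  | and f g => Nat.pair 4 (Nat.pair (toNat f) (toNat g))
  | or f g => Nat.pair 5 (Nat.pair (toNat f) (toNat g))

end BForm

/-- The Muller objective given by a Boolean formula over the vertices: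
the set of plays `π` such that `inf(π) ⊨ φ`. -/
def mullerObj (φ : BForm V) : Set (Play V) :=
  {π | BForm.holds (· ∈ infSet π) φ}

/-- Terminal-reachability objective for a set `F` of (terminal) vertices. -/
def trObjS (F : Set V) : Set (Play V) := {π | ∃ m, π m ∈ F}

/-- Terminal-reachability objective, Boolean-valued version. -/
def trObj (F : V → Bool) : Set (Play V) := trObjS {v | F v = true}

/-! ### End components -/

/-- `E` is an end component of the arena `A` regarded as an MDP of
player `i`: it is nonempty, strongly connected, every vertex of `E`
has a successor in `E`, and vertices not controlled by `i` have all
their successors in `E`. -/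
def IsEndComponent (A : Arena k V) (i : Fin (k + 1)) (E : Set V) : Prop :=
  E.Nonempty ∧
  (∀ u ∈ E, ∀ v ∈ E,
    Relation.ReflTransGen (fun a b => a ∈ E ∧ b ∈ E ∧ b ∈ A.next a) u v) ∧
  (∀ v ∈ E, (A.next v ∩ E).Nonempty) ∧
  (∀ v ∈ E, A.owner v ≠ some i → A.next v ⊆ E)

end NCRSPPaper

namespace NCRSPPaper

/-! ### A concrete machine model, resource-bounded classes, encodings -/

/-- A configuration of a machine with `s+1` states and tape alphabet
`Fin (a+3)` (symbol `0` is the blank, symbols `1`/`2` encode the input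
bits `false`/`true`), on a one-way infinite tape. -/
structure Cfg (s a : ℕ) where
  q : Fin (s + 1)
  tape : ℕ → Fin (a + 3)
  pos : ℕ

def blankSym (a : ℕ) : Fin (a + 3) := ⟨0, by omega⟩

def bitSym (a : ℕ) (b : Bool) : Fin (a + 3) :=
  if b then ⟨2, by omega⟩ else ⟨1, by omega⟩

def initCfg (s a : ℕ) (q0 : Fin (s + 1)) (x : List Bool) : Cfg s a :=
  ⟨q0, fun i => if h : i < x.length then bitSym a (x.get ⟨i, h⟩) else blankSym a, 0⟩

/-- The tape holds the output `y` (as bits, followed by a blank). -/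
def readsOff {a : ℕ} (tape : ℕ → Fin (a + 3)) (y : List Bool) : Prop :=
  (∀ i : Fin y.length, tape (i : ℕ) = bitSym a (y.get i)) ∧
  tape y.length = blankSym a

/-- A deterministic Turing machine (one-way infinite single tape). -/
structure TM where
  states : ℕ
  symbols : ℕ
  start : Fin (states + 1)
  accept : Fin (states + 1)
  step : Fin (states + 1) → Fin (symbols + 3) →
    Option (Fin (states + 1) × Fin (symbols + 3) × Bool)

namespace TM

def stepCfg (M : TM) (c : Cfg M.states M.symbols) : Option (Cfg M.states M.symbols) :=
  match M.step c.q (c.tape c.pos) with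
  | none => none
  | some (q', a, mv) =>
      some ⟨q', Function.update c.tape c.pos a, if mv then c.pos + 1 else c.pos - 1⟩

def run (M : TM) (x : List Bool) : ℕ → Option (Cfg M.states M.symbols)
  | 0 => some (initCfg M.states M.symbols M.start x)
  | t + 1 => (M.run x t).bind M.stepCfg

def Halted (M : TM) (c : Cfg M.states M.symbols) : Prop := M.stepCfg c = none

/-- `M` decides the language `L` (with no resource bound): on every input it
halts, and it halts in the accepting state iff the input is in `L`. -/
def Decides (M : TM) (L : Set (List Bool)) : Prop :=
  ∀ x, ∃ t c, M.run x t = some c ∧ M.Halted c ∧ (x ∈ L ↔ c.q = M.accept)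

/-- `M` decides `L` within time `T` (as a function of the input length). -/
def DecidesInTime (M : TM) (L : Set (List Bool)) (T : ℕ → ℕ) : Prop :=
  ∀ x, ∃ t ≤ T x.length, ∃ c, M.run x t = some c ∧ M.Halted c ∧
    (x ∈ L ↔ c.q = M.accept)

/-- `M` decides `L` within space `S`: it halts with the correct verdict and
never moves its head beyond cell `S(|x|)`. -/
def DecidesInSpace (M : TM) (L : Set (List Bool)) (S : ℕ → ℕ) : Prop :=
  ∀ x, (∃ t c, M.run x t = some c ∧ M.Halted c ∧ (x ∈ L ↔ c.q = M.accept)) ∧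
    ∀ t c, M.run x t = some c → c.pos < S x.length

/-- `M` computes, on the encoded inputs `g x`, the encoded outputs `h x`,
within time `T`. -/
def ComputesOn {I : Type} (M : TM) (g h : I → List Bool) (T : ℕ → ℕ) : Prop :=
  ∀ x, ∃ t ≤ T (g x).length, ∃ c, M.run (g x) t = some c ∧ M.Halted c ∧
    readsOff c.tape (h x)

/-- `M` computes the function `f` on all inputs within time `T`. -/
def ComputesInTime (M : TM) (f : List Bool → List Bool) (T : ℕ → ℕ) : Prop :=
  M.ComputesOn id f T

end TM

/-- A nondeterministic Turing machine. -/
structure NTM where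
  states : ℕ
  symbols : ℕ
  start : Fin (states + 1)
  accept : Fin (states + 1)
  step : Fin (states + 1) → Fin (symbols + 3) →
    Finset (Fin (states + 1) × Fin (symbols + 3) × Bool)

namespace NTM

def stepRel (M : NTM) (c c' : Cfg M.states M.symbols) : Prop :=
  ∃ r ∈ M.step c.q (c.tape c.pos),
    c' = ⟨r.1, Function.update c.tape c.pos r.2.1,
          if r.2.2 then c.pos + 1 else c.pos - 1⟩

/-- `M` has an accepting run on `x` staying within space `S`. -/
def AcceptsInSpace (M : NTM) (x : List Bool) (S : ℕ) : Prop :=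
  ∃ (t : ℕ) (cs : ℕ → Cfg M.states M.symbols),
    cs 0 = initCfg M.states M.symbols M.start x ∧
    (∀ i < t, M.stepRel (cs i) (cs (i + 1))) ∧
    (cs t).q = M.accept ∧
    ∀ i ≤ t, (cs i).pos < S

/-- The nondeterministic machine `M` decides `L` within space `S`. -/
def DecidesInSpace (M : NTM) (L : Set (List Bool)) (S : ℕ → ℕ) : Prop :=
  ∀ x, x ∈ L ↔ M.AcceptsInSpace x (S x.length)

end NTM

/-! #### Complexity classes -/

def In2EXPTIME (L : Set (List Bool)) : Prop :=
  ∃ (M : TM) (c : ℕ), M.DecidesInTime L (fun n => 2 ^ 2 ^ (n ^ c + c))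

def In3EXPTIME (L : Set (List Bool)) : Prop :=
  ∃ (M : TM) (c : ℕ), M.DecidesInTime L (fun n => 2 ^ 2 ^ 2 ^ (n ^ c + c))

def InPSPACE (L : Set (List Bool)) : Prop :=
  ∃ (M : TM) (c : ℕ), M.DecidesInSpace L (fun n => n ^ c + c)

def InEXPSPACE (L : Set (List Bool)) : Prop :=
  ∃ (M : TM) (c : ℕ), M.DecidesInSpace L (fun n => 2 ^ (n ^ c + c))

def InNEXPSPACE (L : Set (List Bool)) : Prop :=
  ∃ (M : NTM) (c : ℕ), M.DecidesInSpace L (fun n => 2 ^ (n ^ c + c))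

/-- A language is undecidable if no machine decides it. -/
def Undecidable (L : Set (List Bool)) : Prop := ¬ ∃ M : TM, M.Decides L

def PolytimeComputable (f : List Bool → List Bool) : Prop :=
  ∃ (M : TM) (c : ℕ), M.ComputesInTime f (fun n => n ^ c + c)

def PolytimeReducible (L L' : Set (List Bool)) : Prop :=
  ∃ f, PolytimeComputable f ∧ ∀ x, x ∈ L ↔ f x ∈ L'

def PSPACEHard (L' : Set (List Bool)) : Prop :=
  ∀ L, InPSPACE L → PolytimeReducible L L'

/-- The language of (the encodings of) the yes-instances of a decision
problem `P` on instances of type `I`, for an encoding `enc`. -/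
def langOf {I : Type} (enc : I → List Bool) (P : I → Prop) : Set (List Bool) :=
  {w | ∃ x, enc x = w ∧ P x}

/-! #### Encoding of game instances -/

/-- A concrete encoding of an arena over `Fin n` as a natural number. -/
def encodeArena {k n : ℕ} (A : Arena k (Fin n)) : ℕ :=
  Encodable.encode
    ( k, n,
      List.ofFn (fun v : Fin n => (A.owner v).map Fin.val),
      List.ofFn (fun v : Fin n => List.ofFn (fun w : Fin n => A.edge v w)),
      List.ofFn (fun v : Fin n => List.ofFn (fun w : Fin n => A.prob v w)),
      (A.init : ℕ) )

/-- An instance of NCRSP with Muller objectives: an SMG over vertices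
`Fin n` with players `Fin (k+1)`, Muller objectives given by Boolean
formulas, and a threshold `μ ∈ [0,1]`. -/
structure MullerInstance where
  k : ℕ
  n : ℕ
  A : Arena k (Fin n)
  obj : Fin (k + 1) → BForm (Fin n)
  μ : ℚ
  wf : A.WF
  hμ0 : 0 ≤ μ
  hμ1 : μ ≤ 1

def encodeMullerInstance (I : MullerInstance) : List Bool :=
  Nat.bits (Encodable.encode
    ( encodeArena I.A,
      List.ofFn (fun i => (BForm.map Fin.val (I.obj i)).toNat),
      Encodable.encode I.μ ))

/-- An instance of NCRSP with terminal-reachability objectives. -/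
structure TRInstance where
  k : ℕ
  n : ℕ
  A : Arena k (Fin n)
  F : Fin (k + 1) → Fin n → Bool
  μ : ℚ
  wf : A.WF
  hterm : ∀ i v, F i v = true → A.terminal v
  hμ0 : 0 ≤ μ
  hμ1 : μ ≤ 1

def encodeTRInstance (I : TRInstance) : List Bool :=
  Nat.bits (Encodable.encode
    ( encodeArena I.A,
      List.ofFn (fun i => List.ofFn (fun v => I.F i v)),
      Encodable.encode I.μ ))

/-- An instance of `t`-memory NCRSP with Muller objectives. -/
structure MullerTInstance where
  k : ℕ
  n : ℕ
  A : Arena k (Fin n)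
  obj : Fin (k + 1) → BForm (Fin n)
  t : ℕ
  μ : ℚ
  wf : A.WF
  hμ0 : 0 ≤ μ
  hμ1 : μ ≤ 1

def encodeMullerTInstance (I : MullerTInstance) : List Bool :=
  Nat.bits (Encodable.encode
    ( encodeArena I.A,
      List.ofFn (fun i => (BForm.map Fin.val (I.obj i)).toNat),
      I.t,
      Encodable.encode I.μ ))

/-- An instance of `t`-memory NCRSP on a non-stochastic game (NSMG,
no nature vertices) with terminal-reachability objectives. -/
structure TRTInstance where
  k : ℕ
  n : ℕ
  A : Arena k (Fin n)
  F : Fin (k + 1) → Fin n → Bool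
  t : ℕ
  μ : ℚ
  wf : A.WF
  nonature : ∀ v, A.owner v ≠ none
  hterm : ∀ i v, F i v = true → A.terminal v
  hμ0 : 0 ≤ μ
  hμ1 : μ ≤ 1

def encodeTRTInstance (I : TRTInstance) : List Bool :=
  Nat.bits (Encodable.encode
    ( encodeArena I.A,
      List.ofFn (fun i => List.ofFn (fun v => I.F i v)),
      I.t,
      Encodable.encode I.μ ))

end NCRSPPaper

namespace NCRSPPaper

/-! ### First-order logic over the ordered field of real numbers -/

/-- Terms over the signature `(+, ×, 0, 1)`, with de Bruijn variables. -/
inductive RTerm : Type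
  | var : ℕ → RTerm
  | zero : RTerm
  | one : RTerm
  | add : RTerm → RTerm → RTerm
  | mul : RTerm → RTerm → RTerm

namespace RTerm

noncomputable def eval (ρ : ℕ → ℝ) : RTerm → ℝ
  | var i => ρ i
  | zero => 0
  | one => 1
  | add s t => eval ρ s + eval ρ t
  | mul s t => eval ρ s * eval ρ t

def toNat : RTerm → ℕ
  | var i => Nat.pair 0 i
  | zero => Nat.pair 1 0
  | one => Nat.pair 2 0
  | add s t => Nat.pair 3 (Nat.pair (toNat s) (toNat t))
  | mul s t => Nat.pair 4 (Nat.pair (toNat s) (toNat t))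

end RTerm

/-- First-order formulas over the signature `(+, ×, 0, 1, ≤)`, with de
Bruijn variables. -/
inductive RForm : Type
  | le : RTerm → RTerm → RForm
  | not : RForm → RForm
  | and : RForm → RForm → RForm
  | or : RForm → RForm → RForm
  | ex : RForm → RForm
  | all : RForm → RForm

namespace RForm

/-- Satisfaction in the structure `(ℝ, +, ×, 0, 1, ≤)`. -/
def holds : (ℕ → ℝ) → RForm → Prop
  | ρ, le s t => RTerm.eval ρ s ≤ RTerm.eval ρ t
  | ρ, not f => ¬ holds ρ f
  | ρ, and f g => holds ρ f ∧ holds ρ g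
  | ρ, or f g => holds ρ f ∨ holds ρ g
  | ρ, ex f => ∃ x : ℝ, holds (fun i => match i with | 0 => x | j + 1 => ρ j) f
  | ρ, all f => ∀ x : ℝ, holds (fun i => match i with | 0 => x | j + 1 => ρ j) f

/-- Validity (truth in `(ℝ, +, ×, 0, 1, ≤)` under every assignment;
for sentences this is just truth). -/
def valid (f : RForm) : Prop := ∀ ρ, holds ρ f

/-- Quantifier-free formulas. -/
def QFree : RForm → Prop
  | le _ _ => True
  | not f => QFree f
  | and f g => QFree f ∧ QFree g
  | or f g => QFree f ∧ QFree g
  | ex _ => False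
  | all _ => False

/-- Existential formulas: a block of existential quantifiers applied to a
quantifier-free formula (prenex form with only existential quantifiers). -/
inductive IsExistential : RForm → Prop
  | qf {f : RForm} : QFree f → IsExistential f
  | ex {f : RForm} : IsExistential f → IsExistential (RForm.ex f)

def toNat : RForm → ℕ
  | le s t => Nat.pair 0 (Nat.pair s.toNat t.toNat)
  | not f => Nat.pair 1 (toNat f)
  | and f g => Nat.pair 2 (Nat.pair (toNat f) (toNat g))
  | or f g => Nat.pair 3 (Nat.pair (toNat f) (toNat g))
  | ex f => Nat.pair 4 (toNat f)
  | all f => Nat.pair 5 (toNat f)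

end RForm

def encodeRForm (f : RForm) : List Bool := Nat.bits f.toNat

/-! ### Quantified Boolean formulas -/

/-- Truth of a prenex QBF: `qs` is the (outermost-first) list of
quantifiers (`true` = `∀`, `false` = `∃`); the quantifier at the head of a
suffix of length `j+1` binds variable `j`. -/
def qbfHolds (φ : BForm ℕ) : List Bool → (ℕ → Bool) → Prop
  | [], ρ => BForm.holds (fun i => ρ i = true) φ
  | q :: qs, ρ =>
      if q then ∀ b : Bool, qbfHolds φ qs (Function.update ρ qs.length b)
      else ∃ b : Bool, qbfHolds φ qs (Function.update ρ qs.length b)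

/-- Variables of a Boolean formula are `< m`. -/
def BForm.varsLT (m : ℕ) : BForm ℕ → Prop
  | BForm.tru => True
  | BForm.fls => True
  | BForm.var i => i < m
  | BForm.not f => f.varsLT m
  | BForm.and f g => f.varsLT m ∧ g.varsLT m
  | BForm.or f g => f.varsLT m ∧ g.varsLT m

/-- A prenex quantified Boolean formula with `quants.length` variables. -/
structure QBFInst where
  quants : List Bool
  matrix : BForm ℕ
  wf : matrix.varsLT quants.length

def QBFInst.IsTrue (Q : QBFInst) : Prop :=
  qbfHolds Q.matrix Q.quants (fun _ => false)

def encodeQBFInst (Q : QBFInst) : List Bool :=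
  Nat.bits (Encodable.encode (Q.quants, Q.matrix.toNat))

end NCRSPPaper

namespace NCRSPPaper
open MeasureTheory

section General

variable {k : ℕ} {V : Type} [DecidableEq V]

/-- The length-`n` prefix of a play, as a list. -/
def plpre (π : Play V) (n : ℕ) : List V := List.ofFn (fun i : Fin n => π i)

@[simp] lemma plpre_zero (π : Play V) : plpre π 0 = [] := rfl

@[simp] lemma plpre_length (π : Play V) (n : ℕ) : (plpre π n).length = n := by
  simp [plpre]

lemma plpre_succ (π : Play V) (n : ℕ) : plpre π (n + 1) = plpre π n ++ [π n] := by
  rw [plpre, List.ofFn_succ', List.concat_eq_append]; rfl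

@[simp] lemma plpre_one (π : Play V) : plpre π 1 = [π 0] := by
  simp [plpre_succ]

lemma mem_plpre {π : Play V} {n : ℕ} {y : V} (h : y ∈ plpre π n) :
    ∃ i, i < n ∧ π i = y := by
  rw [plpre, List.mem_ofFn] at h
  obtain ⟨i, hi⟩ := h
  exact ⟨i, i.2, hi⟩

lemma plpre_get (π : Play V) (n : ℕ) (i : ℕ) (h : i < (plpre π n).length) :
    (plpre π n).get ⟨i, h⟩ = π i := by
  simp [plpre]

lemma mem_cyl_iff {π : Play V} {w : List V} : π ∈ cyl w ↔ w = plpre π w.length := by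
  constructor
  · intro h
    refine List.ext_get (by simp) fun i h1 h2 => ?_
    rw [plpre_get]
    exact (h i h1).symm
  · intro h i hi
    rw [List.get_of_eq h, plpre_get]

lemma extProb_snoc (A : Arena k V) (σ : Profile k V) :
    ∀ (l hist : List V) (u u' v : V),
      extProb A σ hist u ((l ++ [u']) ++ [v])
        = extProb A σ hist u (l ++ [u']) * A.stepProb σ (hist ++ u :: l) u' v := by
  intro l
  induction l with
  | nil =>
      intro hist u u' v
      simp [extProb, mul_assoc]
  | cons w l ih =>
      intro hist u u' v
      have h2 : hist ++ [u] ++ w :: l = hist ++ u :: w :: l := by simp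
      simp only [List.cons_append, extProb, List.append_eq, ih, h2, mul_assoc]

lemma wp_snoc (A : Arena k V) (σ : Profile k V) (s : V) (l : List V) (u' v : V) :
    wordProbFrom A σ s ((l ++ [u']) ++ [v])
      = wordProbFrom A σ s (l ++ [u']) * A.stepProb σ l u' v := by
  cases l with
  | nil => simp [wordProbFrom, extProb, mul_assoc]
  | cons x l =>
      simp only [List.cons_append, wordProbFrom]
      rw [extProb_snoc]
      simp [mul_assoc]

lemma wp_plpre (A : Arena k V) (σ : Profile k V) (π : Play V) (n : ℕ) :
    wordProbFrom A σ (π 0) (plpre π (n + 1))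
      = ∏ i ∈ Finset.range n, A.stepProb σ (plpre π i) (π i) (π (i + 1)) := by
  induction n with
  | zero => simp [wordProbFrom, extProb]
  | succ n ih =>
      rw [plpre_succ π (n+1), plpre_succ π n, wp_snoc, ← plpre_succ π n, ih,
        Finset.prod_range_succ]

end General
section General2

variable {k : ℕ} {V : Type} [DecidableEq V]

lemma le_PrFrom_single (A : Arena k V) (σ : Profile k V) (s : V) {O : Set (Play V)}
    {π : Play V} (hπ : π ∈ O) {p : ℝ≥0∞}
    (hp : ∀ n, p ≤ wordProbFrom A σ s (plpre π n)) :
    p ≤ PrFrom A σ s O := by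
  classical
  rw [PrFrom, MeasureTheory.OuterMeasure.ofFunction_apply]
  refine le_iInf fun t => le_iInf fun hcov => ?_
  obtain ⟨i, hi⟩ := Set.mem_iUnion.1 (hcov hπ)
  refine le_trans ?_ (ENNReal.le_tsum i)
  rw [if_neg (Set.nonempty_iff_ne_empty.1 ⟨π, hi⟩)]
  refine le_iInf fun w => le_iInf fun hw => ?_
  rw [mem_cyl_iff.1 (hw hi)]
  exact hp _

lemma le_PrFrom_two (A : Arena k V) (σ : Profile k V) (s : V) {O : Set (Play V)}
    {π₁ π₂ : Play V} (h1 : π₁ ∈ O) (h2 : π₂ ∈ O) (d : ℕ) (hd : π₁ d ≠ π₂ d)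
    {p₁ p₂ : ℝ≥0∞}
    (hp1 : ∀ n, p₁ ≤ wordProbFrom A σ s (plpre π₁ n))
    (hp2 : ∀ n, p₂ ≤ wordProbFrom A σ s (plpre π₂ n))
    (hboth : ∀ n ≤ d, p₁ + p₂ ≤ wordProbFrom A σ s (plpre π₁ n)) :
    p₁ + p₂ ≤ PrFrom A σ s O := by
  classical
  rw [PrFrom, MeasureTheory.OuterMeasure.ofFunction_apply]
  refine le_iInf fun t => le_iInf fun hcov => ?_
  obtain ⟨i₁, hi1⟩ := Set.mem_iUnion.1 (hcov h1)
  obtain ⟨i₂, hi2⟩ := Set.mem_iUnion.1 (hcov h2)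
  by_cases hii : i₁ = i₂
  · subst hii
    refine le_trans ?_ (ENNReal.le_tsum i₁)
    rw [if_neg (Set.nonempty_iff_ne_empty.1 ⟨π₁, hi1⟩)]
    refine le_iInf fun w => le_iInf fun hw => ?_
    have hc1 := mem_cyl_iff.1 (hw hi1)
    have hc2 := mem_cyl_iff.1 (hw hi2)
    have hlen : w.length ≤ d := by
      by_contra hlt
      push_neg at hlt
      have e1 : w.get ⟨d, hlt⟩ = π₁ d := by rw [List.get_of_eq hc1, plpre_get]
      have e2 : w.get ⟨d, hlt⟩ = π₂ d := by rw [List.get_of_eq hc2, plpre_get]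
      exact hd (e1 ▸ e2)
    rw [hc1]
    exact hboth _ hlen
  · refine le_trans ?_ (ENNReal.sum_le_tsum ({i₁, i₂} : Finset ℕ))
    rw [Finset.sum_pair hii]
    refine add_le_add ?_ ?_
    · rw [if_neg (Set.nonempty_iff_ne_empty.1 ⟨π₁, hi1⟩)]
      refine le_iInf fun w => le_iInf fun hw => ?_
      rw [mem_cyl_iff.1 (hw hi1)]
      exact hp1 _
    · rw [if_neg (Set.nonempty_iff_ne_empty.1 ⟨π₂, hi2⟩)]
      refine le_iInf fun w => le_iInf fun hw => ?_
      rw [mem_cyl_iff.1 (hw hi2)]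
      exact hp2 _

lemma PrFrom_le_one (A : Arena k V) (σ : Profile k V) (s : V) (O : Set (Play V)) :
    PrFrom A σ s O ≤ 1 := by
  classical
  refine le_trans (MeasureTheory.OuterMeasure.ofFunction_le O) ?_
  by_cases h : O = ∅
  · simp [h]
  · rw [if_neg h]
    refine le_trans (iInf₂_le ([] : List V) ?_) ?_
    · intro π _ i hi
      simp at hi
    · simp [wordProbFrom]

/-- First hitting word of a vertex set. -/
def FirstHit (X : Set V) (w : List V) : Prop :=
  ∃ l x, w = l ++ [x] ∧ x ∈ X ∧ ∀ y ∈ l, y ∉ X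

lemma PrFrom_trObjS_le [Encodable V] (A : Arena k V) (σ : Profile k V) (s : V)
    (X : Set V) (W₀ : Finset (List V))
    (h0 : ∀ w, FirstHit X w → w ∉ W₀ → wordProbFrom A σ s w = 0) :
    PrFrom A σ s (trObjS X) ≤ ∑ w ∈ W₀, wordProbFrom A σ s w := by
  classical
  set m : Set (Play V) → ℝ≥0∞ := fun S =>
    if S = ∅ then 0
    else ⨅ (w : List V) (_ : S ⊆ cyl w), wordProbFrom A σ s w with hm
  have hmle : ∀ w : List V, m (cyl w) ≤ wordProbFrom A σ s w := by
    intro w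
    by_cases h : cyl w = ∅
    · simp [hm, h]
    · rw [hm]
      simp only
      rw [if_neg h]
      exact iInf₂_le w (fun _ h => h)
  set t : ℕ → Set (Play V) := fun n =>
    match Encodable.decode (α := List V) n with
    | some w =>
        if Encodable.encode w = n ∧ FirstHit X w then cyl w else ∅
    | none => ∅
    with ht
  have hcov : trObjS X ⊆ ⋃ n, t n := by
    intro π hπ
    have hex : ∃ m, π m ∈ X := hπ
    set n0 := Nat.find hex with hn0
    have hmem : π n0 ∈ X := Nat.find_spec hex
    have hmin : ∀ i, i < n0 → π i ∉ X := fun i hi => Nat.find_min hex hi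
    set w := plpre π (n0 + 1) with hwdef
    have hfh : FirstHit X w := by
      refine ⟨plpre π n0, π n0, plpre_succ _ _, hmem, ?_⟩
      intro y hy
      obtain ⟨i, hi, rfl⟩ := mem_plpre hy
      exact hmin i hi
    refine Set.mem_iUnion.2 ⟨Encodable.encode w, ?_⟩
    have : t (Encodable.encode w) = cyl w := by
      rw [ht]
      simp [Encodable.encodek, hfh]
    rw [this]
    refine mem_cyl_iff.2 ?_
    rw [hwdef, plpre_length]
  have hZ : PrFrom A σ s (trObjS X) ≤ ∑' n, m (t n) := by
    rw [PrFrom, MeasureTheory.OuterMeasure.ofFunction_apply]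
    exact iInf_le_of_le t (iInf_le _ hcov)
  refine le_trans hZ ?_
  set g : ℕ → ℝ≥0∞ := fun n =>
    if n ∈ W₀.image Encodable.encode then m (t n) else 0 with hg
  have hpt : ∀ n, m (t n) ≤ g n := by
    intro n
    rw [hg]
    simp only
    by_cases hn : n ∈ W₀.image Encodable.encode
    · rw [if_pos hn]
    · rw [if_neg hn]
      rw [ht]
      simp only
      cases hdec : Encodable.decode (α := List V) n with
      | none => simp [hm]
      | some w =>
          simp only
          by_cases hc : Encodable.encode w = n ∧ FirstHit X w
          · rw [if_pos hc]
            have hw0 : w ∉ W₀ := by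
              intro hwW
              exact hn (Finset.mem_image.2 ⟨w, hwW, hc.1⟩)
            have : wordProbFrom A σ s w = 0 := h0 w hc.2 hw0
            exact le_trans (hmle w) (by rw [this])
          · rw [if_neg hc]
            simp [hm]
  refine le_trans (ENNReal.tsum_le_tsum hpt) ?_
  have hgsum : ∑' n, g n = ∑ n ∈ W₀.image Encodable.encode, m (t n) := by
    rw [tsum_eq_sum (s := W₀.image Encodable.encode)]
    · exact Finset.sum_congr rfl fun n hn => by rw [hg]; simp only [if_pos hn]
    · intro n hn
      rw [hg]; simp only [if_neg hn]
  rw [hgsum, Finset.sum_image (fun a _ b _ h => Encodable.encode_injective h)]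
  refine Finset.sum_le_sum fun w _ => ?_
  have : t (Encodable.encode w) = if Encodable.encode w = Encodable.encode w ∧ FirstHit X w
      then cyl w else ∅ := by
    rw [ht]; simp only [Encodable.encodek]
  rw [this]
  by_cases hc : Encodable.encode w = Encodable.encode w ∧ FirstHit X w
  · rw [if_pos hc]; exact hmle w
  · rw [if_neg hc]; simp [hm]

lemma extProb_ne_zero_mem (A : Arena k V) (σ : Profile k V) (R : Set V)
    (hR : ∀ hist u v, u ∈ R → A.stepProb σ hist u v ≠ 0 → v ∈ R) :
    ∀ (w hist : List V) (u : V), u ∈ R → extProb A σ hist u w ≠ 0 → ∀ y ∈ w, y ∈ R := by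
  intro w
  induction w with
  | nil => intro hist u _ _ y hy; simp at hy
  | cons v rest ih =>
      intro hist u hu hne y hy
      rw [extProb] at hne
      obtain ⟨h1, h2⟩ := mul_ne_zero_iff.1 hne
      have hv : v ∈ R := hR hist u v hu h1
      rcases List.mem_cons.1 hy with rfl | hy'
      · exact hv
      · exact ih (hist ++ [u]) v hv h2 y hy'

lemma wp_ne_zero_mem (A : Arena k V) (σ : Profile k V) (s : V) (R : Set V) (hs : s ∈ R)
    (hR : ∀ hist u v, u ∈ R → A.stepProb σ hist u v ≠ 0 → v ∈ R)
    (w : List V) (hne : wordProbFrom A σ s w ≠ 0) : ∀ y ∈ w, y ∈ R := by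
  cases w with
  | nil => intro y hy; simp at hy
  | cons v rest =>
      rw [wordProbFrom] at hne
      obtain ⟨h1, h2⟩ := mul_ne_zero_iff.1 hne
      have hv : v = s := by
        by_contra h
        rw [if_neg h] at h1
        exact h1 rfl
      subst hv
      intro y hy
      rcases List.mem_cons.1 hy with rfl | hy'
      · exact hs
      · exact extProb_ne_zero_mem A σ R hR rest [] v hs h2 y hy'

lemma PrFrom_trObjS_zero [Encodable V] (A : Arena k V) (σ : Profile k V) (s : V)
    (X : Set V) (R : Set V) (hs : s ∈ R)
    (hR : ∀ hist u v, u ∈ R → A.stepProb σ hist u v ≠ 0 → v ∈ R)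
    (hdisj : ∀ v ∈ R, v ∉ X) :
    PrFrom A σ s (trObjS X) = 0 := by
  have := PrFrom_trObjS_le A σ s X ∅ ?_
  · simpa using this
  · intro w hfh _
    obtain ⟨l, x, rfl, hx, _⟩ := hfh
    by_contra hne
    have hxR : x ∈ R := wp_ne_zero_mem A σ s R hs hR _ hne x (by simp)
    exact hdisj x hxR hx

lemma step_terminal (A : Arena k V) (σ : Profile k V) {v : V} {i : Fin (k + 1)}
    (ho : A.owner v = some i) (hval : Strategy.Valid A (σ i))
    (ht : A.next v = {v}) (hist : List V) :
    A.stepProb σ hist v v = 1 := by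
  have hz : ∀ w, w ≠ v → σ i hist v w = 0 := by
    intro w hw
    by_contra h
    have := hval hist v w h
    rw [ht] at this
    exact hw this
  have h1 : ∑' w, (σ i hist v) w = 1 := (σ i hist v).tsum_coe
  rw [tsum_eq_single v hz] at h1
  rw [Arena.stepProb, ho]
  exact h1

lemma pmf_apply_eq_zero_of {p : PMF V} {v w : V} (h1 : p v = 1) (hw : w ≠ v) : p w = 0 := by
  have h2 : p v + p w ≤ 1 := by
    rw [← p.tsum_coe, ← Finset.sum_pair (fun h => hw h.symm)]
    exact ENNReal.sum_le_tsum _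
  rw [h1] at h2
  have h3 : (1 : ℝ≥0∞) + p w ≤ 1 + 0 := by simpa using h2
  simpa using (ENNReal.add_le_add_iff_left (by norm_num)).1 h3

lemma prod_range_one_except (f : ℕ → ℝ≥0∞) (j : ℕ) (h1 : ∀ i, i ≠ j → f i = 1) (n : ℕ) :
    ∏ i ∈ Finset.range n, f i = if j < n then f j else 1 := by
  by_cases h : j < n
  · rw [if_pos h]
    exact Finset.prod_eq_single j (fun b _ hb => h1 b hb)
      (fun hj => absurd (Finset.mem_range.2 h) hj)
  · rw [if_neg h]
    exact Finset.prod_eq_one fun i hi =>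
      h1 i (fun he => h (he ▸ Finset.mem_range.1 hi))

end General2
section Game

/-! ### The concrete four-player game.

Vertices of `Fin 11`:
`0` = `v₀` (player 1), `1` = `a` (nature), `2` = `v₁` (player 2),
`3` = `b` (nature), `4` = `v_D` (player 3), and terminals
`5` = `a₁`, `6` = `a₂`, `7` = `b₁`, `8` = `b₂`, `9` = `t₁`, `10` = `t₂`
(all owned by player 3). -/

def gOwner : Fin 11 → Option (Fin 4) := fun v =>
  if v = 0 then some 1 else if v = 1 then none else if v = 2 then some 2
  else if v = 3 then none else some 3

def gEdge : Fin 11 → Fin 11 → Bool := fun u v =>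
  decide ((u = 0 ∧ (v = 1 ∨ v = 2)) ∨ (u = 2 ∧ (v = 3 ∨ v = 4)) ∨
    (u = 4 ∧ (v = 9 ∨ v = 10)) ∨ (5 ≤ (u : ℕ) ∧ v = u))

def gProb : Fin 11 → Fin 11 → ℚ := fun u v =>
  if (u = 1 ∧ (v = 5 ∨ v = 6)) ∨ (u = 3 ∧ (v = 7 ∨ v = 8)) then 1/2 else 0

def G : Arena 3 (Fin 11) := ⟨gOwner, gEdge, gProb, 0⟩

def gF : Fin 4 → Fin 11 → Bool := fun i v =>
  decide ((i = 0 ∧ (v = 5 ∨ v = 6 ∨ v = 7 ∨ v = 8)) ∨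
          (i = 1 ∧ (v = 5 ∨ v = 9)) ∨
          (i = 2 ∧ (v = 7 ∨ v = 10)) ∨
          (i = 3 ∧ (v = 9 ∨ v = 10)))

/-- Successor relation of `G`, as an explicit predicate. -/
def nextP (u v : Fin 11) : Prop :=
  (u = 0 ∧ (v = 1 ∨ v = 2)) ∨ (u = 1 ∧ (v = 5 ∨ v = 6)) ∨
  (u = 2 ∧ (v = 3 ∨ v = 4)) ∨ (u = 3 ∧ (v = 7 ∨ v = 8)) ∨
  (u = 4 ∧ (v = 9 ∨ v = 10)) ∨ (5 ≤ (u : ℕ) ∧ v = u)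

instance nextP_dec (u v : Fin 11) : Decidable (nextP u v) := by
  unfold nextP; infer_instance

lemma gProb_pos_iff (u v : Fin 11) :
    (0 < gProb u v) ↔ ((u = 1 ∧ (v = 5 ∨ v = 6)) ∨ (u = 3 ∧ (v = 7 ∨ v = 8))) := by
  unfold gProb
  by_cases h : (u = 1 ∧ (v = 5 ∨ v = 6)) ∨ (u = 3 ∧ (v = 7 ∨ v = 8))
  · rw [if_pos h]
    exact ⟨fun _ => h, fun _ => by norm_num⟩
  · rw [if_neg h]
    exact ⟨fun h0 => absurd h0 (by norm_num), fun hh => absurd hh h⟩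

lemma mem_next_iff (u v : Fin 11) : v ∈ G.next u ↔ nextP u v := by
  show (gOwner u = none ∧ 0 < gProb u v) ∨ (gOwner u ≠ none ∧ gEdge u v = true) ↔ _
  rw [gProb_pos_iff]
  revert u v
  decide

lemma G_wf : G.WF := by
  constructor
  · have h : ∀ u : Fin 11, ∃ v : Fin 11, nextP u v := by decide
    intro u
    obtain ⟨v, hv⟩ := h u
    exact ⟨v, (mem_next_iff u v).2 hv⟩
  · intro u hu
    have hu' : u = 1 ∨ u = 3 := by revert hu; show gOwner u = none → _; revert u; decide
    constructor
    · intro v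
      rcases hu' with rfl | rfl <;>
        · show (0:ℚ) ≤ gProb _ v
          unfold gProb
          split <;> norm_num
    · rcases hu' with rfl | rfl <;>
        · show (∑ v : Fin 11, gProb _ v) = 1
          unfold gProb
          simp (config := { decide := true }) only [Fin.sum_univ_succ,
            Finset.univ_unique, Finset.sum_singleton]
          norm_num

lemma terminal_of_ge5 (v : Fin 11) (hv : 5 ≤ (v : ℕ)) : G.terminal v := by
  have key : ∀ w : Fin 11, nextP v w ↔ w = v := by
    revert hv; revert v; decide
  ext w
  rw [mem_next_iff]
  simpa using key w

lemma G_hterm : ∀ (i : Fin 4) (v : Fin 11), gF i v = true → G.terminal v := by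
  intro i v h
  refine terminal_of_ge5 v ?_
  revert h
  show gF i v = true → _
  revert i v
  decide

lemma step_next {ρ : Profile 3 (Fin 11)} (hρ : Profile.Valid G ρ)
    {hist : List (Fin 11)} {u v : Fin 11} (h : G.stepProb ρ hist u v ≠ 0) :
    v ∈ G.next u := by
  rw [Arena.stepProb] at h
  cases ho : G.owner u with
  | none =>
      rw [ho] at h
      rw [ne_eq, ENNReal.ofReal_eq_zero, not_le] at h
      have : (0 : ℚ) < G.prob u v := by exact_mod_cast h
      exact Or.inl ⟨ho, this⟩
  | some i =>
      rw [ho] at h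
      exact hρ i hist u v h

lemma step_nature {ρ : Profile 3 (Fin 11)} (hist : List (Fin 11)) {u v : Fin 11}
    (hu : G.owner u = none) : G.stepProb ρ hist u v = ENNReal.ofReal ((G.prob u v : ℚ) : ℝ) := by
  rw [Arena.stepProb, hu]

lemma step_owned {ρ : Profile 3 (Fin 11)} (hist : List (Fin 11)) {u : Fin 11} {i : Fin 4}
    (hu : G.owner u = some i) (v : Fin 11) : G.stepProb ρ hist u v = ρ i hist u v := by
  rw [Arena.stepProb, hu]

lemma ofReal_half : ENNReal.ofReal (((1 : ℚ)/2 : ℚ) : ℝ) = 2⁻¹ := by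
  rw [show (((1 : ℚ)/2 : ℚ) : ℝ) = 2⁻¹ by norm_num]
  rw [ENNReal.ofReal_inv_of_pos (by norm_num)]
  norm_num

end Game
section Strat

/-! ### Strategies -/

/-- A positional strategy given by a successor map. -/
noncomputable def pureS (f : Fin 11 → Fin 11) : Strategy (Fin 11) :=
  fun _ u => PMF.pure (f u)

@[simp] lemma pureS_apply (f : Fin 11 → Fin 11) (h : List (Fin 11)) (u v : Fin 11) :
    pureS f h u v = if v = f u then 1 else 0 := by
  rw [pureS, PMF.pure_apply]
  congr 1

lemma pureS_stationary (f : Fin 11 → Fin 11) : Strategy.Stationary (pureS f) :=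
  fun _ _ _ => rfl

lemma pureS_positional (f : Fin 11 → Fin 11) : Strategy.Positional (pureS f) :=
  ⟨pureS_stationary f, fun h u => ⟨f u, by simp⟩⟩

lemma pureS_valid (f : Fin 11 → Fin 11) (hf : ∀ u, nextP u (f u)) :
    Strategy.Valid G (pureS f) := by
  intro hist u v h
  rw [pureS_apply] at h
  have : v = f u := by by_contra hne; rw [if_neg hne] at h; exact h rfl
  exact this ▸ (mem_next_iff u (f u)).2 (hf u)

/-- Default successor map. -/
def nxt : Fin 11 → Fin 11 := fun u =>
  if u = 0 then 1 else if u = 1 then 5 else if u = 2 then 3 else if u = 3 then 7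
  else if u = 4 then 9 else u

lemma nxt_ok : ∀ u, nextP u (nxt u) := by decide

/-- Successor map sending `v₀` to `v₁` and `v₁` to `v_D`. -/
def nxtD : Fin 11 → Fin 11 := fun u =>
  if u = 0 then 2 else if u = 2 then 4 else nxt u

lemma nxtD_ok : ∀ u, nextP u (nxtD u) := by decide

/-- The fair coin on the two terminals `t₁ = 9`, `t₂ = 10`. -/
noncomputable def coin : PMF (Fin 11) :=
  PMF.ofFintype (fun v => if v = 9 ∨ v = 10 then 2⁻¹ else 0) (by
    simp (config := { decide := true }) only [Fin.sum_univ_succ,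
      Finset.univ_unique, Finset.sum_singleton]
    simp [ENNReal.inv_two_add_inv_two])

@[simp] lemma coin_apply (v : Fin 11) : coin v = if v = 9 ∨ v = 10 then 2⁻¹ else 0 := by
  rw [coin, PMF.ofFintype_apply]

/-- Player 3's mixing strategy: at `v_D` branch to `t₁`, `t₂` with
probability `1/2` each; elsewhere follow `nxt`. -/
noncomputable def mixS : Strategy (Fin 11) := fun _ u =>
  if u = 4 then coin else PMF.pure (nxt u)

lemma mixS_stationary : Strategy.Stationary mixS := fun _ _ _ => rfl

lemma mixS_valid : Strategy.Valid G mixS := by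
  intro hist u v h
  rw [mixS] at h
  by_cases hu : u = 4
  · rw [if_pos hu] at h
    rw [coin_apply] at h
    have : v = 9 ∨ v = 10 := by
      by_contra hne; rw [if_neg hne] at h; exact h rfl
    subst hu
    exact (mem_next_iff _ v).2 (by rcases this with rfl | rfl <;> decide)
  · rw [if_neg hu] at h
    rw [PMF.pure_apply] at h
    have : v = nxt u := by by_contra hne; rw [if_neg hne] at h; exact h rfl
    exact this ▸ (mem_next_iff u (nxt u)).2 (nxt_ok u)

lemma mixS_apply4 (h : List (Fin 11)) (v : Fin 11) :
    mixS h 4 v = if v = 9 ∨ v = 10 then 2⁻¹ else 0 := by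
  rw [mixS, if_pos rfl, coin_apply]

end Strat

section Tree

/-! ### The tree of positive-probability words -/

def mkPlay (x1 x2 x3 : Fin 11) : Play (Fin 11) := fun n =>
  if n = 0 then 0 else if n = 1 then x1 else if n = 2 then x2 else x3

def plays : Fin 6 → Play (Fin 11) :=
  ![mkPlay 1 5 5, mkPlay 1 6 6, mkPlay 2 3 7, mkPlay 2 3 8, mkPlay 2 4 9, mkPlay 2 4 10]

/-- Words that are prefixes of one of the six canonical plays. -/
def InTree (w : List (Fin 11)) : Prop := ∃ (i : Fin 6) (n : ℕ), w = plpre (plays i) n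

lemma plays_zero (i : Fin 6) : plays i 0 = 0 := by fin_cases i <;> rfl

lemma plays_ge3 (i : Fin 6) (m : ℕ) (hm : 3 ≤ m) : plays i m = plays i 3 := by
  fin_cases i <;>
    · show mkPlay _ _ _ m = _
      rw [mkPlay]
      rw [if_neg (by omega), if_neg (by omega), if_neg (by omega)]
      rfl

lemma tree_succ (i : Fin 6) (m : ℕ) (v : Fin 11) (hnv : nextP (plays i m) v) :
    ∃ j : Fin 6, plpre (plays j) (m + 2) = plpre (plays i) (m + 1) ++ [v] := by
  match m with
  | 0 =>
      exact (by decide :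
        ∀ (i : Fin 6) (v : Fin 11), nextP (plays i 0) v →
          ∃ j : Fin 6, plpre (plays j) 2 = plpre (plays i) 1 ++ [v]) i v hnv
  | 1 =>
      exact (by decide :
        ∀ (i : Fin 6) (v : Fin 11), nextP (plays i 1) v →
          ∃ j : Fin 6, plpre (plays j) 3 = plpre (plays i) 2 ++ [v]) i v hnv
  | 2 =>
      exact (by decide :
        ∀ (i : Fin 6) (v : Fin 11), nextP (plays i 2) v →
          ∃ j : Fin 6, plpre (plays j) 4 = plpre (plays i) 3 ++ [v]) i v hnv
  | (m + 3) =>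
      have key : ∀ (j : Fin 6) (x : Fin 11), nextP (plays j 3) x → x = plays j 3 := by
        decide
      rw [plays_ge3 i (m + 3) (by omega)] at hnv
      have hv : v = plays i 3 := key i v hnv
      refine ⟨i, ?_⟩
      rw [show m + 3 + 2 = (m + 3 + 1) + 1 from rfl, plpre_succ (plays i) (m + 3 + 1),
        hv, plays_ge3 i (m + 3 + 1) (by omega)]

lemma posWord_inTree {ρ : Profile 3 (Fin 11)} (hρ : Profile.Valid G ρ) :
    ∀ w, wordProbFrom G ρ 0 w ≠ 0 → InTree w := by
  intro w
  induction w using List.reverseRecOn with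
  | nil => intro _; exact ⟨0, 0, rfl⟩
  | append_singleton w v ih =>
      intro hne
      rcases List.eq_nil_or_concat w with rfl | ⟨l, u', rfl⟩
      · simp only [List.nil_append] at hne
        have hv : v = 0 := by
          by_contra h
          rw [wordProbFrom, if_neg h, zero_mul] at hne
          exact hne rfl
        exact ⟨0, 1, by rw [hv]; rfl⟩
      · rw [List.concat_eq_append] at ih hne ⊢
        rw [wp_snoc] at hne
        obtain ⟨h1, h2⟩ := mul_ne_zero_iff.1 hne
        obtain ⟨i, n, hw⟩ := ih h1
        have hnv := (mem_next_iff u' v).1 (step_next hρ h2)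
        have hlen : n = l.length + 1 := by
          have := congrArg List.length hw
          simp at this
          omega
        subst hlen
        rw [plpre_succ] at hw
        have hu' : u' = plays i l.length := by
          have := (List.append_inj' hw rfl).2
          simpa using this
        rw [hu'] at hnv
        obtain ⟨j, hj⟩ := tree_succ i l.length v hnv
        refine ⟨j, l.length + 2, ?_⟩
        rw [hj, plpre_succ (plays i) l.length, ← hw]

end Tree
section Bounds

/-! ### First-hit classification and payoff bounds -/

lemma firstHit_mem (i' : Fin 4) (W₀ : Finset (List (Fin 11)))
    (hkey : ∀ (i : Fin 6) (m : Fin 4), gF i' (plays i (m : ℕ)) = true →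
      (∀ jj : Fin 4, (jj : ℕ) < (m : ℕ) → ¬ gF i' (plays i (jj : ℕ)) = true) →
      plpre (plays i) ((m : ℕ) + 1) ∈ W₀) :
    ∀ w, InTree w → FirstHit {v | gF i' v = true} w → w ∈ W₀ := by
  rintro w ⟨i, n, rfl⟩ ⟨l, x, heq, hx, hav⟩
  have hlen : n = l.length + 1 := by
    have := congrArg List.length heq
    simp at this
    omega
  subst hlen
  rw [plpre_succ] at heq
  obtain ⟨hl, hu⟩ := List.append_inj' heq rfl
  have hx' : plays i l.length = x := by simpa using hu
  subst hx'
  set m := l.length with hm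
  have hmem : ∀ jj, jj < m → plays i jj ∈ l := by
    intro jj hjj
    rw [← hl, plpre, List.mem_ofFn]
    exact ⟨⟨jj, hjj⟩, rfl⟩
  have hm3 : m ≤ 3 := by
    by_contra hgt
    push_neg at hgt
    have h3 : plays i m = plays i 3 := plays_ge3 i m (by omega)
    exact hav (plays i 3) (hmem 3 (by omega)) (by rw [← h3]; exact hx)
  have := hkey i ⟨m, by omega⟩ hx
    (fun jj hjj hgf => hav (plays i (jj : ℕ)) (hmem _ hjj) hgf)
  simpa using this

lemma pay_upper {ρ : Profile 3 (Fin 11)} (hρ : Profile.Valid G ρ) (i' : Fin 4)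
    (W₀ : Finset (List (Fin 11)))
    (hkey : ∀ (i : Fin 6) (m : Fin 4), gF i' (plays i (m : ℕ)) = true →
      (∀ jj : Fin 4, (jj : ℕ) < (m : ℕ) → ¬ gF i' (plays i (jj : ℕ)) = true) →
      plpre (plays i) ((m : ℕ) + 1) ∈ W₀) :
    PrFrom G ρ 0 (trObj (gF i')) ≤ ∑ w ∈ W₀, wordProbFrom G ρ 0 w := by
  refine PrFrom_trObjS_le G ρ 0 _ W₀ ?_
  intro w hfh hW
  by_contra hne
  exact hW (firstHit_mem i' W₀ hkey w (posWord_inTree hρ w hne) hfh)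

/-- Lower bound on all prefix probabilities of a play whose steps all have
probability `1` except possibly step `j`, which has probability `≥ 1/2`. -/
lemma wp_play_ge {ρ : Profile 3 (Fin 11)} {π : Play (Fin 11)} (hπ0 : π 0 = 0) (j : ℕ)
    (hsteps : ∀ ii, ii ≠ j → G.stepProb ρ (plpre π ii) (π ii) (π (ii + 1)) = 1)
    (hj : 2⁻¹ ≤ G.stepProb ρ (plpre π j) (π j) (π (j + 1))) :
    ∀ n, (2 : ℝ≥0∞)⁻¹ ≤ wordProbFrom G ρ 0 (plpre π n) := by
  intro n
  match n with
  | 0 =>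
      show (2 : ℝ≥0∞)⁻¹ ≤ 1
      exact ENNReal.inv_le_one.2 one_le_two
  | (n + 1) =>
      rw [← hπ0, wp_plpre,
        prod_range_one_except _ j hsteps n]
      by_cases hjn : j < n
      · rw [if_pos hjn]; exact hj
      · rw [if_neg hjn]; exact ENNReal.inv_le_one.2 one_le_two

lemma wp_play_one {ρ : Profile 3 (Fin 11)} {π : Play (Fin 11)} (hπ0 : π 0 = 0) (j : ℕ)
    (hsteps : ∀ ii, ii ≠ j → G.stepProb ρ (plpre π ii) (π ii) (π (ii + 1)) = 1) :
    ∀ n ≤ j + 1, wordProbFrom G ρ 0 (plpre π n) = 1 := by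
  intro n hn
  match n with
  | 0 => rfl
  | (n + 1) =>
      rw [← hπ0, wp_plpre, prod_range_one_except _ j hsteps n,
        if_neg (by omega)]

lemma pay_ge_half {ρ : Profile 3 (Fin 11)} {π : Play (Fin 11)} (hπ0 : π 0 = 0) (j : ℕ)
    (hsteps : ∀ ii, ii ≠ j → G.stepProb ρ (plpre π ii) (π ii) (π (ii + 1)) = 1)
    (hj : 2⁻¹ ≤ G.stepProb ρ (plpre π j) (π j) (π (j + 1)))
    {O : Set (Play (Fin 11))} (hO : π ∈ O) :
    (2 : ℝ≥0∞)⁻¹ ≤ PrFrom G ρ 0 O :=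
  le_PrFrom_single G ρ 0 hO (wp_play_ge hπ0 j hsteps hj)

lemma pay_ge_one {ρ : Profile 3 (Fin 11)} {π₁ π₂ : Play (Fin 11)}
    (h01 : π₁ 0 = 0) (h02 : π₂ 0 = 0) (j : ℕ) (hd : π₁ (j + 1) ≠ π₂ (j + 1))
    (hsteps1 : ∀ ii, ii ≠ j → G.stepProb ρ (plpre π₁ ii) (π₁ ii) (π₁ (ii + 1)) = 1)
    (hsteps2 : ∀ ii, ii ≠ j → G.stepProb ρ (plpre π₂ ii) (π₂ ii) (π₂ (ii + 1)) = 1)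
    (hj1 : 2⁻¹ ≤ G.stepProb ρ (plpre π₁ j) (π₁ j) (π₁ (j + 1)))
    (hj2 : 2⁻¹ ≤ G.stepProb ρ (plpre π₂ j) (π₂ j) (π₂ (j + 1)))
    {O : Set (Play (Fin 11))} (hO1 : π₁ ∈ O) (hO2 : π₂ ∈ O) :
    (1 : ℝ≥0∞) ≤ PrFrom G ρ 0 O := by
  have h := le_PrFrom_two G ρ 0 hO1 hO2 (j + 1) hd
    (wp_play_ge h01 j hsteps1 hj1) (wp_play_ge h02 j hsteps2 hj2)
    (fun n hn => by
      rw [wp_play_one h01 j hsteps1 n hn, ENNReal.inv_two_add_inv_two])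
  rwa [ENNReal.inv_two_add_inv_two] at h

/-! Step helpers -/

lemma step_pure {ρ : Profile 3 (Fin 11)} {i : Fin 4} {u : Fin 11}
    (ho : G.owner u = some i) {f : Fin 11 → Fin 11} (hρi : ρ i = pureS f)
    (hist : List (Fin 11)) (v : Fin 11) :
    G.stepProb ρ hist u v = if v = f u then 1 else 0 := by
  rw [step_owned hist ho, hρi, pureS_apply]

lemma step_stat_one {ρ : Profile 3 (Fin 11)} {i : Fin 4} {u c : Fin 11}
    (ho : G.owner u = some i) (hstat : Strategy.Stationary (ρ i))
    (hone : ρ i [] u c = 1) (hist : List (Fin 11)) (v : Fin 11) :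
    G.stepProb ρ hist u v = if v = c then 1 else 0 := by
  rw [step_owned hist ho, hstat hist [] u]
  by_cases hv : v = c
  · rw [if_pos hv, hv, hone]
  · rw [if_neg hv]
    exact pmf_apply_eq_zero_of hone hv

lemma owner_ge5 (u : Fin 11) (hu : 5 ≤ (u : ℕ)) : G.owner u = some 3 := by
  revert hu
  show 5 ≤ (u : ℕ) → gOwner u = some 3
  revert u
  decide

lemma step_term {ρ : Profile 3 (Fin 11)} (hval3 : Strategy.Valid G (ρ 3)) {u : Fin 11}
    (hu : 5 ≤ (u : ℕ)) (hist : List (Fin 11)) :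
    G.stepProb ρ hist u u = 1 :=
  step_terminal G ρ (owner_ge5 u hu) hval3 (terminal_of_ge5 u hu) hist

end Bounds
section MoreHelpers

lemma step_half {ρ : Profile 3 (Fin 11)} (hist : List (Fin 11)) {u v : Fin 11}
    (h : (u = 1 ∧ (v = 5 ∨ v = 6)) ∨ (u = 3 ∧ (v = 7 ∨ v = 8))) :
    G.stepProb ρ hist u v = 2⁻¹ := by
  have ho : G.owner u = none := by rcases h with ⟨rfl, _⟩ | ⟨rfl, _⟩ <;> rfl
  rw [step_nature hist ho]
  have hq : G.prob u v = 1/2 := by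
    show gProb u v = 1/2
    unfold gProb
    exact if_pos h
  rw [hq]
  exact ofReal_half

lemma mkPlay_ge2 (x1 x3 : Fin 11) (m : ℕ) (h : 2 ≤ m) : mkPlay x1 x3 x3 m = x3 := by
  rw [mkPlay, if_neg (by omega), if_neg (by omega)]
  split <;> rfl

lemma plays0_ge2 (m : ℕ) (h : 2 ≤ m) : plays 0 m = 5 := mkPlay_ge2 1 5 m h

lemma plays1_ge2 (m : ℕ) (h : 2 ≤ m) : plays 1 m = 6 := mkPlay_ge2 1 6 m h

end MoreHelpers

/-- There is a four-player SMG with terminal-reachability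
objectives such that with threshold `μ = 1` the answer of
Stationary-Positional-NCRSP is yes while the answer of Stationary-NCRSP
is no. -/
theorem exists_SMG_SP_yes_stationary_no :
    ∃ (n : ℕ) (A : Arena 3 (Fin n)) (F : Fin 4 → Fin n → Bool),
      A.WF ∧ (∀ i v, F i v = true → A.terminal v) ∧
      NCRSPAnswer A (fun i => trObj (F i))
        Strategy.Stationary Strategy.Positional 1 ∧
      ¬ NCRSPAnswer A (fun i => trObj (F i))
        Strategy.Stationary Strategy.Stationary 1 := by
  classical
  have hone : ENNReal.ofReal ((1 : ℚ) : ℝ) = 1 := by norm_num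
  have ho0 : G.owner 0 = some 1 := rfl
  have ho2 : G.owner 2 = some 2 := by decide
  have ho4 : G.owner 4 = some 3 := by decide
  refine ⟨11, G, gF, G_wf, G_hterm, ?_, ?_⟩
  · -- Stationary-Positional-NCRSP answers yes
    refine ⟨pureS nxt, pureS_valid nxt nxt_ok, pureS_stationary nxt, ?_⟩
    intro σ hσ0 hval henv hNE
    rw [hone]
    obtain ⟨hstat1, hpure1⟩ := henv 1 (by decide)
    obtain ⟨hstat2, hpure2⟩ := henv 2 (by decide)
    obtain ⟨hstat3, hpure3⟩ := henv 3 (by decide)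
    obtain ⟨c1, hc1⟩ := hpure1 [] 0
    have hc1' : c1 = 1 ∨ c1 = 2 := by
      have h := hval 1 [] 0 c1 (by rw [hc1]; exact one_ne_zero)
      rw [mem_next_iff] at h
      exact (by decide : ∀ c : Fin 11, nextP 0 c → c = 1 ∨ c = 2) c1 h
    show (1 : ℝ≥0∞) ≤ PrFrom G σ G.init (trObj (gF 0))
    rcases hc1' with rfl | rfl
    · -- player 1 goes to the safe nature vertex a : the system wins
      have hsteps1 : ∀ ii, ii ≠ 1 →
          G.stepProb σ (plpre (plays 0) ii) (plays 0 ii) (plays 0 (ii + 1)) = 1 := by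
        intro ii hii
        match ii with
        | 0 => rw [show plays 0 0 = 0 from rfl, show plays 0 1 = 1 from rfl,
            step_stat_one ho0 hstat1 hc1, if_pos rfl]
        | 1 => exact absurd rfl hii
        | (ii + 2) =>
            rw [plays0_ge2 (ii + 2) (by omega), plays0_ge2 (ii + 2 + 1) (by omega)]
            exact step_term (hval 3) (by decide) _
      have hsteps2 : ∀ ii, ii ≠ 1 →
          G.stepProb σ (plpre (plays 1) ii) (plays 1 ii) (plays 1 (ii + 1)) = 1 := by
        intro ii hii
        match ii with
        | 0 => rw [show plays 1 0 = 0 from rfl, show plays 1 1 = 1 from rfl,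
            step_stat_one ho0 hstat1 hc1, if_pos rfl]
        | 1 => exact absurd rfl hii
        | (ii + 2) =>
            rw [plays1_ge2 (ii + 2) (by omega), plays1_ge2 (ii + 2 + 1) (by omega)]
            exact step_term (hval 3) (by decide) _
      refine pay_ge_one (π₁ := plays 0) (π₂ := plays 1) rfl rfl 1 (by decide)
        hsteps1 hsteps2 ?_ ?_ ⟨2, by decide⟩ ⟨2, by decide⟩
      · rw [show plays 0 1 = 1 from rfl, show plays 0 2 = 5 from rfl,
          step_half _ (by decide)]
      · rw [show plays 1 1 = 1 from rfl, show plays 1 2 = 6 from rfl,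
          step_half _ (by decide)]
    · -- player 1 goes to v₁
      obtain ⟨c2, hc2⟩ := hpure2 [] 2
      have hc2' : c2 = 3 ∨ c2 = 4 := by
        have h := hval 2 [] 2 c2 (by rw [hc2]; exact one_ne_zero)
        rw [mem_next_iff] at h
        exact (by decide : ∀ c : Fin 11, nextP 2 c → c = 3 ∨ c = 4) c2 h
      rcases hc2' with rfl | rfl
      · -- player 2 goes to the safe nature vertex b : the system wins
        have hsteps1 : ∀ ii, ii ≠ 2 →
            G.stepProb σ (plpre (plays 2) ii) (plays 2 ii) (plays 2 (ii + 1)) = 1 := by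
          intro ii hii
          match ii with
          | 0 => rw [show plays 2 0 = 0 from rfl, show plays 2 1 = 2 from rfl,
              step_stat_one ho0 hstat1 hc1, if_pos rfl]
          | 1 => rw [show plays 2 1 = 2 from rfl, show plays 2 2 = 3 from rfl,
              step_stat_one ho2 hstat2 hc2, if_pos rfl]
          | 2 => exact absurd rfl hii
          | (ii + 3) =>
              rw [plays_ge3 2 (ii + 3) (by omega), plays_ge3 2 (ii + 3 + 1) (by omega)]
              exact step_term (hval 3) (by decide) _
        have hsteps2 : ∀ ii, ii ≠ 2 →
            G.stepProb σ (plpre (plays 3) ii) (plays 3 ii) (plays 3 (ii + 1)) = 1 := by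
          intro ii hii
          match ii with
          | 0 => rw [show plays 3 0 = 0 from rfl, show plays 3 1 = 2 from rfl,
              step_stat_one ho0 hstat1 hc1, if_pos rfl]
          | 1 => rw [show plays 3 1 = 2 from rfl, show plays 3 2 = 3 from rfl,
              step_stat_one ho2 hstat2 hc2, if_pos rfl]
          | 2 => exact absurd rfl hii
          | (ii + 3) =>
              rw [plays_ge3 3 (ii + 3) (by omega), plays_ge3 3 (ii + 3 + 1) (by omega)]
              exact step_term (hval 3) (by decide) _
        refine pay_ge_one (π₁ := plays 2) (π₂ := plays 3) rfl rfl 2 (by decide)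
          hsteps1 hsteps2 ?_ ?_ ⟨3, by decide⟩ ⟨3, by decide⟩
        · rw [show plays 2 2 = 3 from rfl, show plays 2 3 = 7 from rfl,
            step_half _ (by decide)]
        · rw [show plays 3 2 = 3 from rfl, show plays 3 3 = 8 from rfl,
            step_half _ (by decide)]
      · -- player 2 goes to v_D : some player can profitably deviate
        obtain ⟨c3, hc3⟩ := hpure3 [] 4
        have hc3' : c3 = 9 ∨ c3 = 10 := by
          have h := hval 3 [] 4 c3 (by rw [hc3]; exact one_ne_zero)
          rw [mem_next_iff] at h
          exact (by decide : ∀ c : Fin 11, nextP 4 c → c = 9 ∨ c = 10) c3 h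
        exfalso
        rcases hc3' with rfl | rfl
        · -- player 3 picks t₁ : player 2 deviates to b
          set τ : Strategy (Fin 11) := pureS nxt with hτ
          have hτv : Strategy.Valid G τ := pureS_valid nxt nxt_ok
          have hρ1 : Function.update σ 2 τ 1 = σ 1 :=
            Function.update_of_ne (by decide) _ _
          have hρ3 : Function.update σ 2 τ 3 = σ 3 :=
            Function.update_of_ne (by decide) _ _
          have hup : PrFrom G σ 0 (trObj (gF 2)) ≤ 0 := by
            refine le_trans (pay_upper hval 2
              ({[0, 2, 3, 7], [0, 2, 4, 10]} : Finset (List (Fin 11))) (by decide)) ?_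
            rw [Finset.sum_pair (by decide)]
            have e1 : wordProbFrom G σ 0 [0, 2, 3, 7] = 0 := by
              simp only [wordProbFrom, extProb, List.nil_append, List.cons_append]
              rw [step_stat_one ho2 hstat2 hc2 [0] 3, if_neg (show ¬((3 : Fin 11) = 4) by decide)]
              simp
            have e2 : wordProbFrom G σ 0 [0, 2, 4, 10] = 0 := by
              simp only [wordProbFrom, extProb, List.nil_append, List.cons_append]
              rw [step_stat_one ho4 hstat3 hc3 [0, 2] 10, if_neg (show ¬((10 : Fin 11) = 9) by decide)]
              simp
            rw [e1, e2]
            simp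
          have hlow : (2 : ℝ≥0∞)⁻¹ ≤ PrFrom G (Function.update σ 2 τ) 0 (trObj (gF 2)) := by
            have hsteps : ∀ ii, ii ≠ 2 →
                G.stepProb (Function.update σ 2 τ) (plpre (plays 2) ii)
                  (plays 2 ii) (plays 2 (ii + 1)) = 1 := by
              intro ii hii
              match ii with
              | 0 => rw [show plays 2 0 = 0 from rfl, show plays 2 1 = 2 from rfl,
                  step_stat_one ho0 (by rw [hρ1]; exact hstat1) (by rw [hρ1]; exact hc1),
                  if_pos rfl]
              | 1 => rw [show plays 2 1 = 2 from rfl, show plays 2 2 = 3 from rfl,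
                  step_pure ho2 (Function.update_self 2 τ σ) _ _,
                  if_pos (show (3 : Fin 11) = nxt 2 by decide)]
              | 2 => exact absurd rfl hii
              | (ii + 3) =>
                  rw [plays_ge3 2 (ii + 3) (by omega), plays_ge3 2 (ii + 3 + 1) (by omega)]
                  exact step_term (by rw [hρ3]; exact hval 3) (by decide) _
            refine pay_ge_half rfl 2 hsteps ?_ ⟨3, by decide⟩
            rw [show plays 2 2 = 3 from rfl, show plays 2 3 = 7 from rfl,
              step_half _ (by decide)]
          have hle := hNE 2 (by decide) τ hτv
          have : (2 : ℝ≥0∞)⁻¹ ≤ 0 := le_trans hlow (le_trans hle hup)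
          simp at this
        · -- player 3 picks t₂ : player 1 deviates to a
          set τ : Strategy (Fin 11) := pureS nxt with hτ
          have hτv : Strategy.Valid G τ := pureS_valid nxt nxt_ok
          have hρ3 : Function.update σ 1 τ 3 = σ 3 :=
            Function.update_of_ne (by decide) _ _
          have hup : PrFrom G σ 0 (trObj (gF 1)) ≤ 0 := by
            refine le_trans (pay_upper hval 1
              ({[0, 1, 5], [0, 2, 4, 9]} : Finset (List (Fin 11))) (by decide)) ?_
            rw [Finset.sum_pair (by decide)]
            have e1 : wordProbFrom G σ 0 [0, 1, 5] = 0 := by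
              simp only [wordProbFrom, extProb, List.nil_append, List.cons_append]
              rw [step_stat_one ho0 hstat1 hc1 [] 1, if_neg (show ¬((1 : Fin 11) = 2) by decide)]
              simp
            have e2 : wordProbFrom G σ 0 [0, 2, 4, 9] = 0 := by
              simp only [wordProbFrom, extProb, List.nil_append, List.cons_append]
              rw [step_stat_one ho4 hstat3 hc3 [0, 2] 9, if_neg (show ¬((9 : Fin 11) = 10) by decide)]
              simp
            rw [e1, e2]
            simp
          have hlow : (2 : ℝ≥0∞)⁻¹ ≤ PrFrom G (Function.update σ 1 τ) 0 (trObj (gF 1)) := by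
            have hsteps : ∀ ii, ii ≠ 1 →
                G.stepProb (Function.update σ 1 τ) (plpre (plays 0) ii)
                  (plays 0 ii) (plays 0 (ii + 1)) = 1 := by
              intro ii hii
              match ii with
              | 0 => rw [show plays 0 0 = 0 from rfl, show plays 0 1 = 1 from rfl,
                  step_pure ho0 (Function.update_self 1 τ σ) _ _,
                  if_pos (show (1 : Fin 11) = nxt 0 by decide)]
              | 1 => exact absurd rfl hii
              | (ii + 2) =>
                  rw [plays0_ge2 (ii + 2) (by omega), plays0_ge2 (ii + 2 + 1) (by omega)]
                  exact step_term (by rw [hρ3]; exact hval 3) (by decide) _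
            refine pay_ge_half rfl 1 hsteps ?_ ⟨2, by decide⟩
            rw [show plays 0 1 = 1 from rfl, show plays 0 2 = 5 from rfl,
              step_half _ (by decide)]
          have hle := hNE 1 (by decide) τ hτv
          have : (2 : ℝ≥0∞)⁻¹ ≤ 0 := le_trans hlow (le_trans hle hup)
          simp at this
  · -- Stationary-NCRSP answers no
    rintro ⟨σ0, hv0, hs0, hco⟩
    set σd : Profile 3 (Fin 11) :=
      fun i => if i = 0 then σ0 else if i = 3 then mixS else pureS nxtD with hσd
    have hσd0 : σd 0 = σ0 := rfl
    have hσd1 : σd 1 = pureS nxtD := rfl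
    have hσd2 : σd 2 = pureS nxtD := rfl
    have hσd3 : σd 3 = mixS := rfl
    have hvd : Profile.Valid G σd := by
      intro i
      fin_cases i
      · exact hv0
      · exact pureS_valid nxtD nxtD_ok
      · exact pureS_valid nxtD nxtD_ok
      · exact mixS_valid
    have henvd : ∀ i : Fin 4, i ≠ 0 → Strategy.Stationary (σd i) := by
      intro i hi
      fin_cases i
      · exact absurd rfl hi
      · exact pureS_stationary nxtD
      · exact pureS_stationary nxtD
      · exact mixS_stationary
    -- step facts for the two candidate plays under σd
    have hst4 : ∀ ii, ii ≠ 2 →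
        G.stepProb σd (plpre (plays 4) ii) (plays 4 ii) (plays 4 (ii + 1)) = 1 := by
      intro ii hii
      match ii with
      | 0 => rw [show plays 4 0 = 0 from rfl, show plays 4 1 = 2 from rfl,
          step_pure ho0 hσd1 _ _, if_pos (show (2 : Fin 11) = nxtD 0 by decide)]
      | 1 => rw [show plays 4 1 = 2 from rfl, show plays 4 2 = 4 from rfl,
          step_pure ho2 hσd2 _ _, if_pos (show (4 : Fin 11) = nxtD 2 by decide)]
      | 2 => exact absurd rfl hii
      | (ii + 3) =>
          rw [plays_ge3 4 (ii + 3) (by omega), plays_ge3 4 (ii + 3 + 1) (by omega)]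
          exact step_term (by rw [hσd3]; exact mixS_valid) (by decide) _
    have hst5 : ∀ ii, ii ≠ 2 →
        G.stepProb σd (plpre (plays 5) ii) (plays 5 ii) (plays 5 (ii + 1)) = 1 := by
      intro ii hii
      match ii with
      | 0 => rw [show plays 5 0 = 0 from rfl, show plays 5 1 = 2 from rfl,
          step_pure ho0 hσd1 _ _, if_pos (show (2 : Fin 11) = nxtD 0 by decide)]
      | 1 => rw [show plays 5 1 = 2 from rfl, show plays 5 2 = 4 from rfl,
          step_pure ho2 hσd2 _ _, if_pos (show (4 : Fin 11) = nxtD 2 by decide)]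
      | 2 => exact absurd rfl hii
      | (ii + 3) =>
          rw [plays_ge3 5 (ii + 3) (by omega), plays_ge3 5 (ii + 3 + 1) (by omega)]
          exact step_term (by rw [hσd3]; exact mixS_valid) (by decide) _
    have hj4 : (2 : ℝ≥0∞)⁻¹ ≤
        G.stepProb σd (plpre (plays 4) 2) (plays 4 2) (plays 4 3) := by
      rw [show plays 4 2 = 4 from rfl, show plays 4 3 = 9 from rfl,
        step_owned _ ho4, hσd3, mixS_apply4,
        if_pos (show (9 : Fin 11) = 9 ∨ (9 : Fin 11) = 10 by decide)]
    have hj5 : (2 : ℝ≥0∞)⁻¹ ≤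
        G.stepProb σd (plpre (plays 5) 2) (plays 5 2) (plays 5 3) := by
      rw [show plays 5 2 = 4 from rfl, show plays 5 3 = 10 from rfl,
        step_owned _ ho4, hσd3, mixS_apply4,
        if_pos (show (10 : Fin 11) = 9 ∨ (10 : Fin 11) = 10 by decide)]
    have hZ : ZeroNE G (fun i => trObj (gF i)) σd := by
      intro i hi τ hτ
      fin_cases i
      · exact absurd rfl hi
      · -- player 1 cannot improve
        have hρ2 : Function.update σd 1 τ 2 = pureS nxtD :=
          Function.update_of_ne (by decide) _ _
        have hρ3 : Function.update σd 1 τ 3 = mixS :=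
          Function.update_of_ne (by decide) _ _
        have hvd' : Profile.Valid G (Function.update σd 1 τ) := by
          intro j
          rcases eq_or_ne j 1 with rfl | hj
          · rw [Function.update_self]; exact hτ
          · rw [Function.update_of_ne hj]; exact hvd j
        have hlow : (2 : ℝ≥0∞)⁻¹ ≤ PrFrom G σd 0 (trObj (gF 1)) :=
          pay_ge_half rfl 2 hst4 hj4 ⟨3, by decide⟩
        have hupp : PrFrom G (Function.update σd 1 τ) 0 (trObj (gF 1)) ≤ 2⁻¹ := by
          refine le_trans (pay_upper hvd' 1
            ({[0, 1, 5], [0, 2, 4, 9]} : Finset (List (Fin 11))) (by decide)) ?_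
          rw [Finset.sum_pair (by decide)]
          have e1 : wordProbFrom G (Function.update σd 1 τ) 0 [0, 1, 5]
              = τ [] 0 1 * 2⁻¹ := by
            simp only [wordProbFrom, extProb, List.nil_append, List.cons_append]
            rw [step_owned [] ho0, Function.update_self, step_half [0] (by decide)]
            simp
          have e2 : wordProbFrom G (Function.update σd 1 τ) 0 [0, 2, 4, 9]
              = τ [] 0 2 * 2⁻¹ := by
            simp only [wordProbFrom, extProb, List.nil_append, List.cons_append]
            rw [step_owned [] ho0, Function.update_self,
              step_pure ho2 hρ2 [0] 4, if_pos (show (4 : Fin 11) = nxtD 2 by decide),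
              step_owned [0, 2] ho4, hρ3, mixS_apply4,
              if_pos (show (9 : Fin 11) = 9 ∨ (9 : Fin 11) = 10 by decide)]
            simp
          rw [e1, e2, ← add_mul]
          have hsum : τ [] 0 1 + τ [] 0 2 ≤ 1 := by
            have h := ENNReal.sum_le_tsum (f := fun v => τ [] 0 v)
              ({1, 2} : Finset (Fin 11))
            rw [Finset.sum_pair (by decide), (τ [] 0).tsum_coe] at h
            exact h
          calc (τ [] 0 1 + τ [] 0 2) * 2⁻¹ ≤ 1 * 2⁻¹ := mul_le_mul_left hsum _
            _ = 2⁻¹ := one_mul _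
        exact le_trans hupp hlow
      · -- player 2 cannot improve
        have hρ1 : Function.update σd 2 τ 1 = pureS nxtD :=
          Function.update_of_ne (by decide) _ _
        have hρ3 : Function.update σd 2 τ 3 = mixS :=
          Function.update_of_ne (by decide) _ _
        have hvd' : Profile.Valid G (Function.update σd 2 τ) := by
          intro j
          rcases eq_or_ne j 2 with rfl | hj
          · rw [Function.update_self]; exact hτ
          · rw [Function.update_of_ne hj]; exact hvd j
        have hlow : (2 : ℝ≥0∞)⁻¹ ≤ PrFrom G σd 0 (trObj (gF 2)) :=
          pay_ge_half rfl 2 hst5 hj5 ⟨3, by decide⟩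
        have hupp : PrFrom G (Function.update σd 2 τ) 0 (trObj (gF 2)) ≤ 2⁻¹ := by
          refine le_trans (pay_upper hvd' 2
            ({[0, 2, 3, 7], [0, 2, 4, 10]} : Finset (List (Fin 11))) (by decide)) ?_
          rw [Finset.sum_pair (by decide)]
          have e1 : wordProbFrom G (Function.update σd 2 τ) 0 [0, 2, 3, 7]
              = τ [0] 2 3 * 2⁻¹ := by
            simp only [wordProbFrom, extProb, List.nil_append, List.cons_append]
            rw [step_pure ho0 hρ1 [] 2, if_pos (show (2 : Fin 11) = nxtD 0 by decide),
              step_owned [0] ho2, Function.update_self, step_half [0, 2] (by decide)]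
            simp
          have e2 : wordProbFrom G (Function.update σd 2 τ) 0 [0, 2, 4, 10]
              = τ [0] 2 4 * 2⁻¹ := by
            simp only [wordProbFrom, extProb, List.nil_append, List.cons_append]
            rw [step_pure ho0 hρ1 [] 2, if_pos (show (2 : Fin 11) = nxtD 0 by decide),
              step_owned [0] ho2, Function.update_self,
              step_owned [0, 2] ho4, hρ3, mixS_apply4,
              if_pos (show (10 : Fin 11) = 9 ∨ (10 : Fin 11) = 10 by decide)]
            simp
          rw [e1, e2, ← add_mul]
          have hsum : τ [0] 2 3 + τ [0] 2 4 ≤ 1 := by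
            have h := ENNReal.sum_le_tsum (f := fun v => τ [0] 2 v)
              ({3, 4} : Finset (Fin 11))
            rw [Finset.sum_pair (by decide), (τ [0] 2).tsum_coe] at h
            exact h
          calc (τ [0] 2 3 + τ [0] 2 4) * 2⁻¹ ≤ 1 * 2⁻¹ := mul_le_mul_left hsum _
            _ = 2⁻¹ := one_mul _
        exact le_trans hupp hlow
      · -- player 3 cannot improve : he already wins almost surely
        have hge1 : (1 : ℝ≥0∞) ≤ PrFrom G σd 0 (trObj (gF 3)) :=
          pay_ge_one (π₁ := plays 4) (π₂ := plays 5) rfl rfl 2 (by decide)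
            hst4 hst5 hj4 hj5 ⟨3, by decide⟩ ⟨3, by decide⟩
        exact le_trans (PrFrom_le_one G _ _ _) hge1
    have hpay := hco σd hσd0 hvd henvd hZ
    rw [hone] at hpay
    have h0 : PrFrom G σd 0 (trObj (gF 0)) ≤ 0 := by
      refine le_trans (pay_upper hvd 0
        ({[0, 1, 5], [0, 1, 6], [0, 2, 3, 7], [0, 2, 3, 8]} : Finset (List (Fin 11)))
        (by decide)) ?_
      refine le_of_eq (Finset.sum_eq_zero ?_)
      intro w hw
      simp only [Finset.mem_insert, Finset.mem_singleton] at hw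
      rcases hw with rfl | rfl | rfl | rfl
      · simp only [wordProbFrom, extProb, List.nil_append, List.cons_append]
        rw [step_pure ho0 hσd1 [] 1, if_neg (show ¬((1 : Fin 11) = nxtD 0) by decide)]
        simp
      · simp only [wordProbFrom, extProb, List.nil_append, List.cons_append]
        rw [step_pure ho0 hσd1 [] 1, if_neg (show ¬((1 : Fin 11) = nxtD 0) by decide)]
        simp
      · simp only [wordProbFrom, extProb, List.nil_append, List.cons_append]
        rw [step_pure ho2 hσd2 [0] 3, if_neg (show ¬((3 : Fin 11) = nxtD 2) by decide)]
        simp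
      · simp only [wordProbFrom, extProb, List.nil_append, List.cons_append]
        rw [step_pure ho2 hσd2 [0] 3, if_neg (show ¬((3 : Fin 11) = nxtD 2) by decide)]
        simp
    have hcontra : (1 : ℝ≥0∞) ≤ 0 := le_trans hpay h0
    simp at hcontra

end NCRSPPaper
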